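/- arXiv:1904.12541 — 4 statements merged into one kernel-verified Lean document; each statement's English description precedes it below -/
import Mathlib

section
/- If a Lie algebra g admits two stratifications g = V_1 ⊕ ⋯ ⊕ V_r = W_1 ⊕ ⋯ ⊕ W_s, then r = s and there exists a Lie algebra automorphism A of g with A(V_i) = W_i for all i; consequently the homogeneous dimension Q = Σ i·dim(V_i) is independent of the stratification. -/
open Module

/-- `V 1, …, V r` is a stratification of the Lie algebra `g`:
`g = V 1 ⊕ ⋯ ⊕ V r`, `[V 1, V i] = V (i+1)` for `1 ≤ i ≤ r`, `V (r+1) = 0`,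
`V r ≠ 0`. -/
def IsStratification (g : Type*) [LieRing g] [LieAlgebra ℝ g]
    (r : ℕ) (V : ℕ → Submodule ℝ g) : Prop :=
  1 ≤ r ∧
  (⨆ i ∈ Finset.Icc 1 r, V i = (⊤ : Submodule ℝ g)) ∧
  iSupIndep (fun i : Finset.Icc 1 r => V i) ∧
  (∀ i, 1 ≤ i → i ≤ r →
    V (i + 1) = Submodule.span ℝ {z : g | ∃ x ∈ V 1, ∃ y ∈ V i, ⁅x, y⁆ = z}) ∧
  V (r + 1) = ⊥ ∧ V r ≠ ⊥

/-! The partial sums `V k ⊔ ⋯ ⊔ V r` are the terms of the lower central series, so they do not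
depend on the stratification; hence `r = s`, and `V k`, `W k` are both complements of the
`(k+1)`-st term inside the `k`-th. The automorphism sends `x ∈ V k` to its `W k`-component, which
differs from `x` by terms of degree `> k`. As brackets are graded, `A ⁅x, y⁆` and `⁅A x, A y⁆`
are then two elements of `W (i + j)` that agree modulo degree `> i + j`, so they are equal. -/

namespace Submodule

variable {ι κ R M N P : Type*} [CommSemiring R] [AddCommMonoid M] [AddCommMonoid N]
  [AddCommMonoid P] [Module R M] [Module R N] [Module R P]

theorem apply_mem_of_mem_iSup (f : M →ₗ[R] N →ₗ[R] P) {p : ι → Submodule R M}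
    {q : κ → Submodule R N} {t : Submodule R P} (h : ∀ i j, ∀ x ∈ p i, ∀ y ∈ q j, f x y ∈ t)
    {x : M} {y : N} (hx : x ∈ ⨆ i, p i) (hy : y ∈ ⨆ j, q j) : f x y ∈ t := by
  have hle : map₂ f (⨆ i, p i) (⨆ j, q j) ≤ t := by
    simp only [map₂_iSup_left, map₂_iSup_right, iSup_le_iff, map₂_le]
    exact fun j i => h i j
  exact map₂_le.1 hle x hx y hy

end Submodule

theorem lie_mem_add_of_eq_span {R L : Type*} [CommRing R] [LieRing L] [LieAlgebra R L]
    {G : ℕ → Submodule R L}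
    (hG : ∀ i, 1 ≤ i → G (i + 1) = Submodule.span R {z | ∃ x ∈ G 1, ∃ y ∈ G i, ⁅x, y⁆ = z})
    {i j : ℕ} (hi : 1 ≤ i) (hj : 1 ≤ j) {x y : L} (hx : x ∈ G i) (hy : y ∈ G j) :
    ⁅x, y⁆ ∈ G (i + j) := by
  have lie_one : ∀ {j}, 1 ≤ j → ∀ {x y}, x ∈ G 1 → y ∈ G j → ⁅x, y⁆ ∈ G (j + 1) :=
    fun hj x y hx hy => hG _ hj ▸ Submodule.subset_span ⟨x, hx, y, hy, rfl⟩
  induction i, hi using Nat.le_induction generalizing j x y with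
  | base => rw [add_comm]; exact lie_one hj hx hy
  | succ i hi ih =>
    rw [hG i hi] at hx
    induction hx using Submodule.span_induction with
    | mem z hz =>
      obtain ⟨u, hu, w, hw, rfl⟩ := hz
      have h₁ : ⁅u, ⁅w, y⁆⁆ ∈ G (i + j + 1) := lie_one (by omega) hu (ih hj hw hy)
      have h₂ : ⁅w, ⁅u, y⁆⁆ ∈ G (i + (j + 1)) := ih (by omega) hw (lie_one hj hu hy)
      rw [lie_lie]
      convert sub_mem h₁ h₂ using 2
      omega
    | zero => simp
    | add a b _ _ ha hb => rw [add_lie]; exact add_mem ha hb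
    | smul t a _ ha => rw [smul_lie]; exact Submodule.smul_mem _ _ ha

namespace DirectSum.IsInternal

variable {R M ι : Type*} [Semiring R] [AddCommMonoid M] [Module R M] [DecidableEq ι]
  {A : ι → Submodule R M} (h : IsInternal A)

noncomputable def proj (i : ι) : M →ₗ[R] M :=
  (A i).subtype ∘ₗ component R ι (fun i => A i) i ∘ₗ
    (LinearEquiv.ofBijective (coeLinearMap A) h).symm.toLinearMap

theorem proj_mem (i : ι) (x : M) : h.proj i x ∈ A i :=
  Subtype.property _

theorem proj_of_mem {i : ι} {x : M} (hx : x ∈ A i) : h.proj i x = x := by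
  simp [proj, ← apply_eq_component, h.ofBijective_coeLinearMap_of_mem hx]

theorem proj_of_mem_ne {i j : ι} (hij : i ≠ j) {x : M} (hx : x ∈ A i) : h.proj j x = 0 := by
  simp [proj, ← apply_eq_component, h.ofBijective_coeLinearMap_of_mem_ne hij hx]

end DirectSum.IsInternal

namespace IsStratification

variable {g : Type*} [LieRing g] [LieAlgebra ℝ g]

/-- Extending by `⊥` outside `1, …, r` makes `⁅layer i, layer j⁆ ≤ layer (i + j)` hold for all
`i` and `j`, also beyond the step `r`. -/
def layer (r : ℕ) (V : ℕ → Submodule ℝ g) (k : ℕ) : Submodule ℝ g :=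
  if k ∈ Finset.Icc 1 r then V k else ⊥

def tail (r : ℕ) (V : ℕ → Submodule ℝ g) (k : ℕ) : Submodule ℝ g :=
  ⨆ m, layer r V (k + m)

variable {r s : ℕ} {V W : ℕ → Submodule ℝ g}

theorem layer_of_mem {k : ℕ} (hk : k ∈ Finset.Icc 1 r) : layer r V k = V k := if_pos hk

theorem layer_of_notMem {k : ℕ} (hk : k ∉ Finset.Icc 1 r) : layer r V k = ⊥ := if_neg hk

theorem layer_zero : layer r V 0 = ⊥ := layer_of_notMem (by simp)

theorem layer_le_tail (k : ℕ) : layer r V k ≤ tail r V k :=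
  le_iSup_of_le 0 le_rfl

theorem tail_eq_layer_sup (k : ℕ) : tail r V k = layer r V k ⊔ tail r V (k + 1) := by
  simp only [tail, ← sup_iSup_nat_succ (fun m => layer r V (k + m)), add_zero, add_assoc,
    add_comm 1]

theorem tail_eq_bot {k : ℕ} (hk : r < k) : tail r V k = ⊥ :=
  iSup_eq_bot.2 fun m => layer_of_notMem (by simp; omega)

section

variable (hV : IsStratification g r V)
include hV

theorem layer_succ {i : ℕ} (hi : 1 ≤ i) :
    layer r V (i + 1) =
      Submodule.span ℝ {z | ∃ x ∈ layer r V 1, ∃ y ∈ layer r V i, ⁅x, y⁆ = z} := by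
  by_cases hir : i ≤ r
  · rw [layer_of_mem (Finset.mem_Icc.2 ⟨le_rfl, hV.1⟩),
      layer_of_mem (Finset.mem_Icc.2 ⟨hi, hir⟩), ← hV.2.2.2.1 i hi hir]
    rcases hir.lt_or_eq with hlt | rfl
    · exact layer_of_mem (Finset.mem_Icc.2 ⟨by omega, hlt⟩)
    · rw [layer_of_notMem (by simp), hV.2.2.2.2.1]
  · rw [layer_of_notMem (k := i + 1) (by simp; omega), layer_of_notMem (k := i) (by simp; omega)]
    refine (Submodule.span_eq_bot.2 ?_).symm
    rintro z ⟨x, -, y, hy, rfl⟩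
    rw [(Submodule.mem_bot ℝ).1 hy, lie_zero]

theorem lie_mem_layer {i j : ℕ} {x y : g} (hx : x ∈ layer r V i) (hy : y ∈ layer r V j) :
    ⁅x, y⁆ ∈ layer r V (i + j) := by
  rcases Nat.eq_zero_or_pos i with rfl | hi
  · rw [layer_zero, Submodule.mem_bot] at hx
    simp [hx]
  rcases Nat.eq_zero_or_pos j with rfl | hj
  · rw [layer_zero, Submodule.mem_bot] at hy
    simp [hy]
  exact lie_mem_add_of_eq_span (fun i hi => hV.layer_succ hi) hi hj hx hy

theorem isInternal_layer : DirectSum.IsInternal (layer r V) := by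
  refine DirectSum.isInternal_submodule_of_iSupIndep_of_iSup_eq_top ?_ ?_
  · refine iSupIndep_def.2 fun k => ?_
    by_cases hk : k ∈ Finset.Icc 1 r
    · rw [layer_of_mem hk]
      refine (hV.2.2.1 ⟨k, hk⟩).mono_right (iSup₂_le fun j hj => ?_)
      by_cases hj' : j ∈ Finset.Icc 1 r
      · rw [layer_of_mem hj']
        exact le_iSup₂_of_le (f := fun (j : Finset.Icc 1 r) _ => V j) ⟨j, hj'⟩
          (fun h => hj (congrArg Subtype.val h)) le_rfl
      · rw [layer_of_notMem hj']
        exact bot_le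
    · rw [layer_of_notMem hk]
      exact disjoint_bot_left
  · have h : ∀ k, layer r V k = ⨆ _ : k ∈ Finset.Icc 1 r, V k := fun k => (iSup_eq_if _).symm
    exact (iSup_congr h).trans hV.2.1

theorem tail_zero : tail r V 0 = ⊤ := by
  simpa [tail] using hV.isInternal_layer.submodule_iSup_eq_top

theorem tail_one : tail r V 1 = ⊤ := by
  rw [← hV.tail_zero, tail_eq_layer_sup 0, layer_zero, bot_sup_eq]

theorem lie_mem_tail {a b : ℕ} {x y : g} (hx : x ∈ tail r V a) (hy : y ∈ tail r V b) :
    ⁅x, y⁆ ∈ tail r V (a + b) := by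
  refine Submodule.apply_mem_of_mem_iSup (LieModule.toEnd ℝ g g : g →ₗ[ℝ] Module.End ℝ g)
    (fun m n x hx y hy => ?_) hx hy
  have h := hV.lie_mem_layer hx hy
  rw [show a + m + (b + n) = a + b + (m + n) by omega] at h
  exact Submodule.mem_iSup_of_mem (m + n) h

theorem tail_succ {k : ℕ} (hk : 1 ≤ k) :
    tail r V (k + 1) = Submodule.span ℝ {⁅x, y⁆ | (x ∈ (⊤ : LieIdeal ℝ g)) (y ∈ tail r V k)} := by
  apply le_antisymm
  · refine iSup_le fun m => ?_
    rw [show k + 1 + m = k + m + 1 by omega, hV.layer_succ (by omega)]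
    refine Submodule.span_mono ?_
    rintro z ⟨x, -, y, hy, rfl⟩
    exact ⟨x, trivial, y, Submodule.mem_iSup_of_mem m hy, rfl⟩
  · rw [Submodule.span_le]
    rintro z ⟨x, -, y, hy, rfl⟩
    rw [add_comm]
    exact hV.lie_mem_tail (hV.tail_one ▸ Submodule.mem_top) hy

theorem tail_succ_eq_lowerCentralSeries (k : ℕ) :
    tail r V (k + 1) = (LieModule.lowerCentralSeries ℝ g g k).toSubmodule := by
  induction k with
  | zero => exact hV.tail_one
  | succ k ih =>
    rw [hV.tail_succ (by omega), ih, LieModule.lowerCentralSeries_succ,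
      LieSubmodule.lieIdeal_oper_eq_linear_span']
    rfl

theorem tail_eq (hW : IsStratification g s W) (k : ℕ) : tail r V k = tail s W k := by
  cases k with
  | zero => rw [hV.tail_zero, hW.tail_zero]
  | succ k => rw [hV.tail_succ_eq_lowerCentralSeries, hW.tail_succ_eq_lowerCentralSeries]

theorem le_of_isStratification (hW : IsStratification g s W) : r ≤ s := by
  by_contra! hsr
  have hVr : V r ≤ tail s W r := by
    rw [← hV.tail_eq hW, ← layer_of_mem (r := r) (V := V) (Finset.mem_Icc.2 ⟨hV.1, le_rfl⟩)]
    exact layer_le_tail r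
  rw [tail_eq_bot hsr, le_bot_iff] at hVr
  exact hV.2.2.2.2.2 hVr

theorem proj_eq_zero_of_mem_tail {k : ℕ} {x : g} (hx : x ∈ tail r V (k + 1)) :
    hV.isInternal_layer.proj k x = 0 := by
  have h : tail r V (k + 1) ≤ LinearMap.ker (hV.isInternal_layer.proj k) :=
    iSup_le fun m _ hy => hV.isInternal_layer.proj_of_mem_ne (by omega) hy
  exact h hx

theorem eq_of_sub_mem_tail {k : ℕ} {u v : g} (hu : u ∈ layer r V k) (hv : v ∈ layer r V k)
    (h : u - v ∈ tail r V (k + 1)) : u = v := by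
  have hdisj : Disjoint (layer r V k) (tail r V (k + 1)) :=
    (hV.isInternal_layer.submodule_iSupIndep k).mono_right
      (iSup_le fun m => le_iSup₂_of_le (k + 1 + m) (by omega) le_rfl)
  exact sub_eq_zero.1 (Submodule.disjoint_def.1 hdisj _ (sub_mem hu hv) h)

end

noncomputable def transfer (hV : IsStratification g r V) (hW : IsStratification g r W) :
    g →ₗ[ℝ] g :=
  ∑ k ∈ Finset.Icc 1 r, hW.isInternal_layer.proj k ∘ₗ hV.isInternal_layer.proj k

section

variable (hV : IsStratification g r V) (hW : IsStratification g r W)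

theorem transfer_of_mem {k : ℕ} {x : g} (hx : x ∈ layer r V k) :
    hV.transfer hW x = hW.isInternal_layer.proj k x := by
  rw [transfer, LinearMap.sum_apply, Finset.sum_eq_single k]
  · rw [LinearMap.comp_apply, hV.isInternal_layer.proj_of_mem hx]
  · intro j _ hjk
    rw [LinearMap.comp_apply, hV.isInternal_layer.proj_of_mem_ne (Ne.symm hjk) hx, map_zero]
  · intro hk
    rw [layer_of_notMem hk, Submodule.mem_bot] at hx
    simp [hx]

theorem transfer_mem_layer {k : ℕ} {x : g} (hx : x ∈ layer r V k) :
    hV.transfer hW x ∈ layer r W k := by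
  rw [hV.transfer_of_mem hW hx]
  exact hW.isInternal_layer.proj_mem k x

theorem transfer_sub_mem_tail {k : ℕ} {x : g} (hx : x ∈ layer r V k) :
    hV.transfer hW x - x ∈ tail r W (k + 1) := by
  have hx' : x ∈ tail r W k := hV.tail_eq hW k ▸ layer_le_tail k hx
  rw [tail_eq_layer_sup, Submodule.mem_sup] at hx'
  obtain ⟨w, hw, t, ht, rfl⟩ := hx'
  rw [hV.transfer_of_mem hW hx, map_add, hW.isInternal_layer.proj_of_mem hw,
    hW.proj_eq_zero_of_mem_tail ht, add_zero, sub_add_cancel_left]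
  exact neg_mem ht

theorem transfer_lie_of_mem {i j : ℕ} {x y : g} (hx : x ∈ layer r V i) (hy : y ∈ layer r V j) :
    hV.transfer hW ⁅x, y⁆ = ⁅hV.transfer hW x, hV.transfer hW y⁆ := by
  set T := hV.transfer hW
  have hxy := hV.lie_mem_layer hx hy
  refine hW.eq_of_sub_mem_tail (hV.transfer_mem_layer hW hxy)
    (hW.lie_mem_layer (hV.transfer_mem_layer hW hx) (hV.transfer_mem_layer hW hy)) ?_
  have h₁ : T ⁅x, y⁆ - ⁅x, y⁆ ∈ tail r W (i + j + 1) := hV.transfer_sub_mem_tail hW hxy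
  have h₂ : ⁅T x, T y⁆ - ⁅x, y⁆ ∈ tail r W (i + j + 1) := by
    rw [show ⁅T x, T y⁆ - ⁅x, y⁆ = ⁅T x - x, T y⁆ + ⁅x, T y - y⁆ by rw [sub_lie, lie_sub]; abel]
    refine add_mem ?_ ?_
    · have h := hW.lie_mem_tail (hV.transfer_sub_mem_tail hW hx)
        (layer_le_tail j (hV.transfer_mem_layer hW hy))
      rwa [show i + 1 + j = i + j + 1 by omega] at h
    · have h := hW.lie_mem_tail (hV.tail_eq hW i ▸ layer_le_tail i hx)
        (hV.transfer_sub_mem_tail hW hy)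
      rwa [← add_assoc] at h
  simpa only [sub_sub_sub_cancel_right] using sub_mem h₁ h₂

theorem transfer_lie (x y : g) :
    hV.transfer hW ⁅x, y⁆ = ⁅hV.transfer hW x, hV.transfer hW y⁆ := by
  set T := hV.transfer hW
  let bracket : g →ₗ[ℝ] g →ₗ[ℝ] g := LieModule.toEnd ℝ g g
  suffices h : (bracket.compr₂ T - bracket.compl₁₂ T T) x y ∈ (⊥ : Submodule ℝ g) by
    simpa [bracket, sub_eq_zero] using h
  have hg : ∀ z : g, z ∈ ⨆ i, layer r V i := fun z =>
    hV.isInternal_layer.submodule_iSup_eq_top ▸ Submodule.mem_top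
  refine Submodule.apply_mem_of_mem_iSup _ (fun i j x hx y hy => ?_) (hg x) (hg y)
  simpa [bracket, sub_eq_zero] using hV.transfer_lie_of_mem hW hx hy

theorem map_transfer_layer (k : ℕ) : (layer r V k).map (hV.transfer hW) = layer r W k := by
  refine le_antisymm (Submodule.map_le_iff_le_comap.2 fun x hx => hV.transfer_mem_layer hW hx)
    fun w hw => ?_
  have hw' : w ∈ tail r V k := (hV.tail_eq hW k).symm ▸ layer_le_tail k hw
  rw [tail_eq_layer_sup, Submodule.mem_sup] at hw'
  obtain ⟨v, hv, t, ht, rfl⟩ := hw'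
  refine ⟨v, hv, hW.eq_of_sub_mem_tail (hV.transfer_mem_layer hW hv) hw ?_⟩
  rw [← sub_sub]
  exact sub_mem (hV.transfer_sub_mem_tail hW hv) (hV.tail_eq hW _ ▸ ht)

theorem transfer_surjective : Function.Surjective (hV.transfer hW) := by
  rw [← LinearMap.range_eq_top, eq_top_iff, ← hW.isInternal_layer.submodule_iSup_eq_top]
  exact iSup_le fun k => hV.map_transfer_layer hW k ▸ LinearMap.map_le_range

end

end IsStratification

/-- If a Lie algebra admits two stratifications `g = V 1 ⊕ ⋯ ⊕ V r = W 1 ⊕ ⋯ ⊕ W s`,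
then `r = s` and there is a Lie algebra automorphism `A` of `g` with `A (V i) = W i`
for all `i`; consequently the homogeneous dimension `Q = ∑ i · dim (V i)` does not
depend on the stratification. -/
theorem stratification_unique_up_to_automorphism
    (g : Type*) [LieRing g] [LieAlgebra ℝ g] [FiniteDimensional ℝ g]
    (r s : ℕ) (V W : ℕ → Submodule ℝ g)
    (hV : IsStratification g r V) (hW : IsStratification g s W) :
    r = s ∧
    (∃ A : g ≃ₗ⁅ℝ⁆ g, ∀ i, 1 ≤ i → i ≤ r → (V i).map (A : g →ₗ[ℝ] g) = W i) ∧
    ∑ i ∈ Finset.Icc 1 r, i * finrank ℝ (V i) = ∑ i ∈ Finset.Icc 1 s, i * finrank ℝ (W i) := by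
  obtain rfl : r = s := le_antisymm (hV.le_of_isStratification hW) (hW.le_of_isStratification hV)
  have hT := hV.transfer_surjective hW
  let A : g ≃ₗ⁅ℝ⁆ g := LieEquiv.ofBijective
    { hV.transfer hW with map_lie' := hV.transfer_lie hW _ _ }
    ⟨LinearMap.injective_iff_surjective.2 hT, hT⟩
  have hA : ∀ i, 1 ≤ i → i ≤ r → (V i).map (A : g →ₗ[ℝ] g) = W i := fun i h1 hr => by
    have hi := Finset.mem_Icc.2 ⟨h1, hr⟩
    rw [← IsStratification.layer_of_mem (V := V) hi, ← IsStratification.layer_of_mem (V := W) hi]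
    exact hV.map_transfer_layer hW i
  refine ⟨rfl, ⟨A, hA⟩, Finset.sum_congr rfl fun i hi => ?_⟩
  obtain ⟨h1, hr⟩ := Finset.mem_Icc.1 hi
  rw [← hA i h1 hr]
  exact congrArg _ (LinearEquiv.finrank_map_eq A.toLinearEquiv (V i)).symm
end

section
/- Let ∗: ℝ^d × ℝ^d → ℝ^d be a product of the form z ∗ w = z + w + F(z,w) where F_1 is constant and each F_i (i ≥ 2) is continuous depending only on z_1,…,z_{i-1}, w_1,…,w_{i-1}. Let A = I × Ã and B = J × B̃ where I, J are compact intervals in ℝ and Ã, B̃ ⊂ ℝ^{d-1} are measurable. Then there exist z'_1 ∈ I and w'_1 ∈ J such that |A ∗ B| ≥ |I + J| · L^{d-1}(Ã ∗̃ B̃), where ∗̃ is the product on ℝ^{d-1} given by z̃ ∗̃ w̃ = z̃ + w̃ + (F_2,…,F_d)((z'_1, z̃), (w'_1, w̃)). Moreover, if F does not depend on z_1, w_1, equality holds. -/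
/-!
Since the first coordinate of `F` is a constant `κ`, for `z₁ ∈ I`, `w₁ ∈ J` the slice of `A ∗ B`
over `t = z₁ + w₁ + κ` contains `Ã ∗̃ B̃`, with `∗̃` frozen at `(z₁, w₁)`. These `t` fill the
translate `I + J + κ`, and by Fubini the slices of (a measurable hull of) `A ∗ B` over it have
average measure at most `|A ∗ B| / |I + J|`, so some slice is at most this average. If `F`
ignores `z₁, w₁`, then `A ∗ B` is exactly `(I + J + κ) × (Ã ∗̃ B̃)`.
-/

open MeasureTheory Set
open scoped Pointwise ENNReal

theorem MeasureTheory.Measure.exists_measure_mul_measure_prodMk_preimage_le_prod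
    {α β : Type*} [MeasurableSpace α] [MeasurableSpace β] (μ : Measure α) (ν : Measure β)
    [SFinite ν] (S : Set (α × β)) {U : Set α} (hU : U.Nonempty) (hμU : μ U ≠ ∞) :
    ∃ t ∈ U, μ U * ν (Prod.mk t ⁻¹' S) ≤ μ.prod ν S := by
  rcases eq_or_ne (μ U) 0 with hμU₀ | hμU₀
  · obtain ⟨t, ht⟩ := hU
    exact ⟨t, ht, by simp [hμU₀]⟩
  set T := toMeasurable (μ.prod ν) S
  have hT : MeasurableSet T := measurableSet_toMeasurable _ _
  obtain ⟨t, ht, hle⟩ :=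
    exists_le_setLAverage hμU₀ hμU (measurable_measure_prodMk_left (ν := ν) hT).aemeasurable
  refine ⟨t, ht, ?_⟩
  calc μ U * ν (Prod.mk t ⁻¹' S) ≤ μ U * ν (Prod.mk t ⁻¹' T) := by
        gcongr; exact subset_toMeasurable _ _
    _ ≤ μ U * ⨍⁻ x in U, ν (Prod.mk x ⁻¹' T) ∂μ := mul_le_mul' le_rfl hle
    _ = ∫⁻ x in U, ν (Prod.mk x ⁻¹' T) ∂μ := measure_mul_setLAverage _ hμU
    _ ≤ ∫⁻ x, ν (Prod.mk x ⁻¹' T) ∂μ := setLIntegral_le_lintegral _ _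
    _ = μ.prod ν S := by rw [← Measure.prod_apply hT, measure_toMeasurable]

section PerturbedSum

variable {Y : Type*} [Add Y]

def perturbedSum (F : ℝ × Y → ℝ × Y → ℝ × Y) (z w : ℝ × Y) : ℝ × Y := z + w + F z w

def slicePerturbedSum (F : ℝ × Y → ℝ × Y → ℝ × Y) (z₁ w₁ : ℝ) (zt wt : Y) : Y :=
  zt + wt + (F (z₁, zt) (w₁, wt)).2

theorem image2_slicePerturbedSum_subset_preimage {F : ℝ × Y → ℝ × Y → ℝ × Y} {κ : ℝ}
    (hκ : ∀ z w, (F z w).1 = κ) {I J : Set ℝ} {A B : Set Y} {z₁ w₁ : ℝ} (hz₁ : z₁ ∈ I)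
    (hw₁ : w₁ ∈ J) :
    image2 (slicePerturbedSum F z₁ w₁) A B ⊆
      Prod.mk (z₁ + w₁ + κ) ⁻¹' image2 (perturbedSum F) (I ×ˢ A) (J ×ˢ B) := by
  rintro _ ⟨zt, hzt, wt, hwt, rfl⟩
  exact ⟨(z₁, zt), ⟨hz₁, hzt⟩, (w₁, wt), ⟨hw₁, hwt⟩, Prod.ext (by simp [perturbedSum, hκ]) rfl⟩

theorem image2_perturbedSum_eq_prod {F : ℝ × Y → ℝ × Y → ℝ × Y} {κ : ℝ}
    (hκ : ∀ z w, (F z w).1 = κ) (hF : ∀ z w (c c' : ℝ), F z w = F (c, z.2) (c', w.2))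
    (I J : Set ℝ) (A B : Set Y) (z₁ w₁ : ℝ) :
    image2 (perturbedSum F) (I ×ˢ A) (J ×ˢ B) =
      ((· + κ) '' (I + J)) ×ˢ image2 (slicePerturbedSum F z₁ w₁) A B := by
  ext p
  constructor
  · rintro ⟨z, ⟨hz₁, hzt⟩, w, ⟨hw₁, hwt⟩, rfl⟩
    refine ⟨⟨z.1 + w.1, add_mem_add hz₁ hw₁, by simp [perturbedSum, hκ]⟩,
      z.2, hzt, w.2, hwt, ?_⟩
    simp [perturbedSum, slicePerturbedSum, hF z w z₁ w₁]
  · rintro ⟨⟨_, ⟨z₁', hz₁', w₁', hw₁', rfl⟩, hp₁⟩, zt, hzt, wt, hwt, hp₂⟩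
    refine ⟨(z₁', zt), ⟨hz₁', hzt⟩, (w₁', wt), ⟨hw₁', hwt⟩, ?_⟩
    rw [perturbedSum, hF (z₁', zt) (w₁', wt) z₁ w₁]
    exact Prod.ext (by simp [← hp₁, hκ]) hp₂

variable [MeasurableSpace Y] (ν : Measure Y) [SFinite ν]

theorem exists_volume_add_mul_le_measure_image2_perturbedSum {F : ℝ × Y → ℝ × Y → ℝ × Y}
    {κ : ℝ} (hκ : ∀ z w, (F z w).1 = κ) {I J : Set ℝ} (hI : I.Nonempty) (hJ : J.Nonempty)
    (hIJ : volume (I + J) ≠ ∞) (A B : Set Y) :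
    ∃ z₁ ∈ I, ∃ w₁ ∈ J, volume (I + J) * ν (image2 (slicePerturbedSum F z₁ w₁) A B) ≤
      (volume.prod ν) (image2 (perturbedSum F) (I ×ˢ A) (J ×ˢ B)) := by
  have hvol : volume ((· + κ) '' (I + J)) = volume (I + J) := by
    rw [image_add_right, measure_preimage_add_right]
  obtain ⟨_, ⟨_, ⟨z₁, hz₁, w₁, hw₁, rfl⟩, rfl⟩, hle⟩ :=
    Measure.exists_measure_mul_measure_prodMk_preimage_le_prod volume ν
      (image2 (perturbedSum F) (I ×ˢ A) (J ×ˢ B)) ((hI.add hJ).image _) (hvol ▸ hIJ)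
  refine ⟨z₁, hz₁, w₁, hw₁, le_trans ?_ hle⟩
  rw [hvol]
  gcongr
  exact image2_slicePerturbedSum_subset_preimage hκ hz₁ hw₁

theorem measure_image2_perturbedSum_eq {F : ℝ × Y → ℝ × Y → ℝ × Y} {κ : ℝ}
    (hκ : ∀ z w, (F z w).1 = κ) (hF : ∀ z w (c c' : ℝ), F z w = F (c, z.2) (c', w.2))
    (I J : Set ℝ) (A B : Set Y) (z₁ w₁ : ℝ) :
    (volume.prod ν) (image2 (perturbedSum F) (I ×ˢ A) (J ×ˢ B)) =
      volume (I + J) * ν (image2 (slicePerturbedSum F z₁ w₁) A B) := by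
  rw [image2_perturbedSum_eq_prod hκ hF I J A B z₁ w₁, Measure.prod_prod, image_add_right,
    measure_preimage_add_right]

end PerturbedSum

theorem slicing_lemma_triangular_product_general (m : ℕ)
    (F : ℝ × (Fin m → ℝ) → ℝ × (Fin m → ℝ) → ℝ × (Fin m → ℝ))
    -- the first component of `F` is constant:
    (hF1 : ∀ z w z' w', (F z w).1 = (F z' w').1)
    (a b a' b' : ℝ) (hab : a ≤ b) (hab' : a' ≤ b')
    (At Bt : Set (Fin m → ℝ)) :
    ∃ z₁' ∈ Icc a b, ∃ w₁' ∈ Icc a' b',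
      (volume (image2 (fun z w => z + w + F z w) (Icc a b ×ˢ At) (Icc a' b' ×ˢ Bt)) ≥
        volume (Icc a b + Icc a' b') *
          volume (image2 (fun zt wt : Fin m → ℝ => zt + wt + (F (z₁', zt) (w₁', wt)).2) At Bt)) ∧
      ((∀ (z w : ℝ × (Fin m → ℝ)) (c c' : ℝ), F z w = F (c, z.2) (c', w.2)) →
        volume (image2 (fun z w => z + w + F z w) (Icc a b ×ˢ At) (Icc a' b' ×ˢ Bt)) =
          volume (Icc a b + Icc a' b') *
            volume (image2 (fun zt wt : Fin m → ℝ => zt + wt + (F (z₁', zt) (w₁', wt)).2) At Bt)) := by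
  have hκ : ∀ z w, (F z w).1 = (F 0 0).1 := fun z w => hF1 z w 0 0
  obtain ⟨z₁, hz₁, w₁, hw₁, hle⟩ :=
    exists_volume_add_mul_le_measure_image2_perturbedSum volume hκ (nonempty_Icc.2 hab)
      (nonempty_Icc.2 hab') (isCompact_Icc.add isCompact_Icc).measure_ne_top At Bt
  exact ⟨z₁, hz₁, w₁, hw₁, hle, fun hF =>
    measure_image2_perturbedSum_eq volume hκ hF _ _ At Bt z₁ w₁⟩

/-- Key lemma: for a triangular product `z ∗ w = z + w + F z w` on `ℝ × ℝ^{d-1}`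
(`F₁` constant, each `F_i`, `i ≥ 2`, continuous and depending only on the previous
coordinates of `z` and `w`) and sets `A = I × Ã`, `B = J × B̃` with `I, J` compact
intervals and `Ã, B̃` measurable, there are `z₁' ∈ I`, `w₁' ∈ J` with
`|A ∗ B| ≥ |I + J| ⋅ L^{d-1}(Ã ∗̃ B̃)`, where `z̃ ∗̃ w̃ = z̃ + w̃ + (F₂,…,F_d)((z₁',z̃),(w₁',w̃))`.
Moreover, if `F` does not depend on `z₁, w₁`, equality holds. -/
theorem slicing_lemma_triangular_product (m : ℕ)
    (F : ℝ × (Fin m → ℝ) → ℝ × (Fin m → ℝ) → ℝ × (Fin m → ℝ))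
    (hFcont : Continuous fun p : (ℝ × (Fin m → ℝ)) × (ℝ × (Fin m → ℝ)) => F p.1 p.2)
    -- the first component of `F` is constant:
    (hF1 : ∀ z w z' w', (F z w).1 = (F z' w').1)
    -- the `i`-th component of the second block depends only on the first coordinate
    -- and the previous coordinates of the second block:
    (hFtri : ∀ (i : Fin m) (z w z' w' : ℝ × (Fin m → ℝ)), z.1 = z'.1 → w.1 = w'.1 →
      (∀ j : Fin m, (j : ℕ) < (i : ℕ) → z.2 j = z'.2 j ∧ w.2 j = w'.2 j) →
      (F z w).2 i = (F z' w').2 i)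
    (a b a' b' : ℝ) (hab : a ≤ b) (hab' : a' ≤ b')
    (At Bt : Set (Fin m → ℝ)) (hAt : MeasurableSet At) (hBt : MeasurableSet Bt) :
    ∃ z₁' ∈ Icc a b, ∃ w₁' ∈ Icc a' b',
      (volume (image2 (fun z w => z + w + F z w) (Icc a b ×ˢ At) (Icc a' b' ×ˢ Bt)) ≥
        volume (Icc a b + Icc a' b') *
          volume (image2 (fun zt wt : Fin m → ℝ => zt + wt + (F (z₁', zt) (w₁', wt)).2) At Bt)) ∧
      ((∀ (z w : ℝ × (Fin m → ℝ)) (c c' : ℝ), F z w = F (c, z.2) (c', w.2)) →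
        volume (image2 (fun z w => z + w + F z w) (Icc a b ×ˢ At) (Icc a' b' ×ˢ Bt)) =
          volume (Icc a b + Icc a' b') *
            volume (image2 (fun zt wt : Fin m → ℝ => zt + wt + (F (z₁', zt) (w₁', wt)).2) At Bt)) :=
  slicing_lemma_triangular_product_general m F hF1 a b a' b' hab hab' At Bt
end

section
/- In the case of rectangles, for a triangular product ∗ as above and A = I_1 × ⋯ × I_d, B = J_1 × ⋯ × J_d products of compact intervals, one has |A ∗ B| ≥ |I_1 + J_1| ⋯ |I_d + J_d| = |A + B|, i.e., the ∗-product of rectangles has measure at least that of their Minkowski sum. -/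
/-!
Induction on the dimension. For triangular `F`, the product of `Fin.snoc z s` and `Fin.snoc w u`
is `Fin.snoc (z ∗' w) (s + u + c z w)`, where `∗'` is a triangular product in one dimension less
and `c` does not depend on `s, u`. So over every point `z ∗' w` of `A' ∗' B'` (the rectangles of
the first `d - 1` sides) the fibre of `A ∗ B` contains a translate of `I_d + J_d`, and Fubini gives
`|A ∗ B| ≥ |A' ∗' B'| · |I_d + J_d|`. Compactness of the sides only serves to make `A' ∗' B'`
measurable.
-/

open MeasureTheory Set
open scoped Pointwise ENNReal

universe u

section Triangular

variable {α β : Type*} {n : ℕ}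

def IsTriangular {d : ℕ} (F : (Fin d → α) → (Fin d → α) → (Fin d → β)) : Prop :=
  ∀ (i : Fin d) (z w z' w' : Fin d → α),
    (∀ j : Fin d, (j : ℕ) < (i : ℕ) → z j = z' j ∧ w j = w' j) → F z w i = F z' w' i

variable [Zero α]

/-- By `IsTriangular.apply_snoc`, the zeros put in the last coordinates do not matter. -/
def triangularInit (F : (Fin (n + 1) → α) → (Fin (n + 1) → α) → (Fin (n + 1) → β))
    (z w : Fin n → α) : Fin n → β :=
  Fin.init (F (Fin.snoc z 0) (Fin.snoc w 0))

def triangularLast (F : (Fin (n + 1) → α) → (Fin (n + 1) → α) → (Fin (n + 1) → β))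
    (z w : Fin n → α) : β :=
  F (Fin.snoc z 0) (Fin.snoc w 0) (Fin.last n)

def triangularMul [Add α] {d : ℕ} (F : (Fin d → α) → (Fin d → α) → (Fin d → α))
    (z w : Fin d → α) : Fin d → α :=
  z + w + F z w

variable {F : (Fin (n + 1) → α) → (Fin (n + 1) → α) → (Fin (n + 1) → β)}

theorem IsTriangular.apply_snoc (hF : IsTriangular F) (z w : Fin n → α) (s u : α) :
    F (Fin.snoc z s) (Fin.snoc w u) = Fin.snoc (triangularInit F z w) (triangularLast F z w) := by
  have hzero : ∀ i, F (Fin.snoc z s) (Fin.snoc w u) i = F (Fin.snoc z 0) (Fin.snoc w 0) i := by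
    refine fun i => hF i _ _ _ _ fun j hj => ?_
    obtain ⟨k, rfl⟩ : ∃ k : Fin n, j = k.castSucc := ⟨⟨j, by omega⟩, rfl⟩
    simp only [Fin.snoc_castSucc, and_self]
  funext i
  induction i using Fin.lastCases with
  | last => simp only [hzero, Fin.snoc_last, triangularLast]
  | cast i => simp only [hzero, Fin.snoc_castSucc, triangularInit, Fin.init]

theorem IsTriangular.triangularMul_snoc [Add α]
    {F : (Fin (n + 1) → α) → (Fin (n + 1) → α) → (Fin (n + 1) → α)} (hF : IsTriangular F)
    (z w : Fin n → α) (s u : α) :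
    triangularMul F (Fin.snoc z s) (Fin.snoc w u) =
      Fin.snoc (triangularMul (triangularInit F) z w) (s + u + triangularLast F z w) := by
  rw [triangularMul, hF.apply_snoc]
  funext i
  induction i using Fin.lastCases with
  | last => simp only [Pi.add_apply, Fin.snoc_last]
  | cast i => simp only [Pi.add_apply, Fin.snoc_castSucc, triangularMul]

theorem IsTriangular.triangularInit (hF : IsTriangular F) : IsTriangular (triangularInit F) := by
  intro i z w z' w' h
  refine hF i.castSucc _ _ _ _ fun j hj => ?_
  obtain ⟨k, rfl⟩ : ∃ k : Fin n, j = k.castSucc :=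
    ⟨⟨j, by rw [Fin.val_castSucc] at hj; omega⟩, rfl⟩
  simpa only [Fin.snoc_castSucc] using h k hj

theorem Continuous.triangularInit [TopologicalSpace α] [TopologicalSpace β]
    (hF : Continuous fun p : (Fin (n + 1) → α) × (Fin (n + 1) → α) => F p.1 p.2) :
    Continuous fun p : (Fin n → α) × (Fin n → α) => triangularInit F p.1 p.2 := by
  have hsnoc : Continuous fun z : Fin n → α => (Fin.snoc z 0 : Fin (n + 1) → α) :=
    Continuous.finSnoc (A := fun _ => α) continuous_id continuous_const
  exact continuous_pi fun i => (continuous_apply i.castSucc).comp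
    (hF.comp ((hsnoc.comp continuous_fst).prodMk (hsnoc.comp continuous_snd)))

end Triangular

theorem mul_le_volume_of_le_volume_insertNth {n : ℕ} {α : Fin (n + 1) → Type u}
    [∀ i, MeasureSpace (α i)] [∀ i, SigmaFinite (volume : Measure (α i))] (p : Fin (n + 1))
    {S : Set (∀ i, α i)} {T : Set (∀ j, α (p.succAbove j))} (hT : MeasurableSet T) {L : ℝ≥0∞}
    (hL : ∀ x ∈ T, L ≤ volume {t | Fin.insertNth p t x ∈ S}) :
    volume T * L ≤ volume S := by
  set e := MeasurableEquiv.piFinSuccAbove α p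
  have he := (volume_preserving_piFinSuccAbove α p).symm e
  set U := toMeasurable volume (e.symm ⁻¹' S)
  calc volume T * L = ∫⁻ x, T.indicator (fun _ => L) x := by
        rw [lintegral_indicator_const hT, mul_comm]
    _ ≤ ∫⁻ x, volume ((fun t => (t, x)) ⁻¹' U) := by
        refine lintegral_mono fun x => ?_
        by_cases hx : x ∈ T
        · rw [indicator_of_mem hx]
          exact (hL x hx).trans (measure_mono fun t ht => subset_toMeasurable _ _ ht)
        · rw [indicator_of_notMem hx]
          exact zero_le
    _ = volume U := (Measure.prod_apply_symm (measurableSet_toMeasurable _ _)).symm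
    _ = volume S := by rw [measure_toMeasurable, he.measure_preimage_equiv]

theorem Fin.snoc_mem_univ_pi {n : ℕ} {α : Fin (n + 1) → Type*} {I : ∀ i, Set (α i)}
    {z : ∀ j : Fin n, α j.castSucc} {s : α (Fin.last n)} :
    Fin.snoc z s ∈ univ.pi I ↔
      z ∈ univ.pi (fun j : Fin n => I j.castSucc) ∧ s ∈ I (Fin.last n) := by
  simp only [mem_univ_pi, Fin.forall_iff_castSucc, Fin.snoc_castSucc, Fin.snoc_last, and_comm]

theorem IsCompact.image2 {X Y Z : Type*} [TopologicalSpace X] [TopologicalSpace Y]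
    [TopologicalSpace Z] {f : X → Y → Z} (hf : Continuous fun p : X × Y => f p.1 p.2)
    {s : Set X} {t : Set Y} (hs : IsCompact s) (ht : IsCompact t) : IsCompact (image2 f s t) :=
  image_uncurry_prod f s t ▸ (hs.prod ht).image hf

theorem univ_pi_add_univ_pi {ι : Type*} {α : ι → Type*} [∀ i, Add (α i)]
    (s t : ∀ i, Set (α i)) : univ.pi s + univ.pi t = univ.pi fun i => s i + t i := by
  ext x
  simp only [mem_add, mem_univ_pi]
  constructor
  · rintro ⟨y, hy, z, hz, rfl⟩ i
    exact ⟨y i, hy i, z i, hz i, rfl⟩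
  · intro h
    choose y hy z hz hyz using h
    exact ⟨y, hy, z, hz, funext hyz⟩

theorem prod_volume_add_le_volume_image2_triangularMul {d : ℕ}
    {F : (Fin d → ℝ) → (Fin d → ℝ) → (Fin d → ℝ)}
    (hFc : Continuous fun p : (Fin d → ℝ) × (Fin d → ℝ) => F p.1 p.2) (hF : IsTriangular F)
    {I J : Fin d → Set ℝ} (hI : ∀ i, IsCompact (I i)) (hJ : ∀ i, IsCompact (J i)) :
    ∏ i, volume (I i + J i) ≤ volume (image2 (triangularMul F) (univ.pi I) (univ.pi J)) := by
  induction d with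
  | zero =>
    have hmem : triangularMul F 0 0 ∈ image2 (triangularMul F) (univ.pi I) (univ.pi J) :=
      mem_image2_of_mem (fun i => i.elim0) (fun i => i.elim0)
    rw [Fin.prod_univ_zero, Measure.volume_pi_eq_dirac, Measure.dirac_apply_of_mem]
    rwa [Subsingleton.elim isEmptyElim (triangularMul F 0 0)]
  | succ n ih =>
    set S := image2 (triangularMul F) (univ.pi I) (univ.pi J)
    set T := image2 (triangularMul (triangularInit F)) (univ.pi fun j => I j.castSucc)
      (univ.pi fun j => J j.castSucc)
    have hT : IsCompact T := by
      refine IsCompact.image2 ?_ (isCompact_univ_pi fun j => hI _) (isCompact_univ_pi fun j => hJ _)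
      exact (continuous_fst.add continuous_snd).add hFc.triangularInit
    have hslice : ∀ x ∈ T, volume (I (Fin.last n) + J (Fin.last n)) ≤
        volume {t | Fin.insertNth (Fin.last n) t x ∈ S} := by
      rintro _ ⟨z, hz, w, hw, rfl⟩
      set c := triangularLast F z w
      rw [← measure_preimage_add_right volume (-c)]
      refine measure_mono ?_
      rintro t ⟨s, hs, u, hu, hsu⟩
      have ht : t = s + u + c := by linarith [show t + -c = s + u from hsu.symm]
      rw [mem_ofPred_eq, Fin.insertNth_last', ht, ← hF.triangularMul_snoc]
      exact mem_image2_of_mem (Fin.snoc_mem_univ_pi.2 ⟨hz, hs⟩) (Fin.snoc_mem_univ_pi.2 ⟨hw, hu⟩)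
    calc ∏ i, volume (I i + J i)
        = (∏ j : Fin n, volume (I j.castSucc + J j.castSucc)) *
            volume (I (Fin.last n) + J (Fin.last n)) := Fin.prod_univ_castSucc _
      _ ≤ volume T * volume (I (Fin.last n) + J (Fin.last n)) := by
        gcongr
        exact ih hFc.triangularInit hF.triangularInit (fun j => hI _) (fun j => hJ _)
      _ ≤ volume S := mul_le_volume_of_le_volume_insertNth (Fin.last n) hT.measurableSet hslice

theorem triangular_product_rectangles_general (d : ℕ)
    (F : (Fin d → ℝ) → (Fin d → ℝ) → (Fin d → ℝ))
    (hFcont : Continuous fun p : (Fin d → ℝ) × (Fin d → ℝ) => F p.1 p.2)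
    -- `F i` depends only on the coordinates `z j`, `w j` for `j < i`
    -- (in particular `F 0` is constant):
    (hFtri : ∀ (i : Fin d) (z w z' w' : Fin d → ℝ),
      (∀ j : Fin d, (j : ℕ) < (i : ℕ) → z j = z' j ∧ w j = w' j) →
      F z w i = F z' w' i)
    (a b a' b' : Fin d → ℝ)
    (A B : Set (Fin d → ℝ))
    (hA : A = univ.pi fun i => Icc (a i) (b i))
    (hB : B = univ.pi fun i => Icc (a' i) (b' i)) :
    volume (image2 (fun z w => z + w + F z w) A B) ≥
      ∏ i : Fin d, volume (Icc (a i) (b i) + Icc (a' i) (b' i)) ∧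
    ∏ i : Fin d, volume (Icc (a i) (b i) + Icc (a' i) (b' i)) = volume (A + B) := by
  subst hA hB
  refine ⟨prod_volume_add_le_volume_image2_triangularMul hFcont hFtri
    (fun _ => isCompact_Icc) (fun _ => isCompact_Icc), ?_⟩
  rw [univ_pi_add_univ_pi, volume_pi_pi]

/-- For a triangular product `z ∗ w = z + w + F z w` on `ℝ^d` and rectangles
`A = I_1 × ⋯ × I_d`, `B = J_1 × ⋯ × J_d` (products of compact intervals), one has
`|A ∗ B| ≥ |I_1 + J_1| ⋯ |I_d + J_d| = |A + B|`: the `∗`-product of rectangles has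
measure at least that of their Minkowski sum. -/
theorem triangular_product_rectangles (d : ℕ)
    (F : (Fin d → ℝ) → (Fin d → ℝ) → (Fin d → ℝ))
    (hFcont : Continuous fun p : (Fin d → ℝ) × (Fin d → ℝ) => F p.1 p.2)
    -- `F i` depends only on the coordinates `z j`, `w j` for `j < i`
    -- (in particular `F 0` is constant):
    (hFtri : ∀ (i : Fin d) (z w z' w' : Fin d → ℝ),
      (∀ j : Fin d, (j : ℕ) < (i : ℕ) → z j = z' j ∧ w j = w' j) →
      F z w i = F z' w' i)
    (a b a' b' : Fin d → ℝ) (hab : ∀ i, a i ≤ b i) (hab' : ∀ i, a' i ≤ b' i)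
    (A B : Set (Fin d → ℝ))
    (hA : A = univ.pi fun i => Icc (a i) (b i))
    (hB : B = univ.pi fun i => Icc (a' i) (b' i)) :
    volume (image2 (fun z w => z + w + F z w) A B) ≥
      ∏ i : Fin d, volume (Icc (a i) (b i) + Icc (a' i) (b' i)) ∧
    ∏ i : Fin d, volume (Icc (a i) (b i) + Icc (a' i) (b' i)) = volume (A + B) :=
  triangular_product_rectangles_general d F hFcont hFtri a b a' b' A B hA hB
end

section
/- If a ∈ ℝ^d is a Lebesgue density point of a measurable set A and b is a density point of B, then a + b = s satisfies that a is a density point of A ∩ (s - B); consequently |A ∩ (s - B)| > 0 for every s in the sumset of the density points, and the set of density points A° of A satisfies |A° + B°| ≥ |A| whenever |A| > 0. -/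
open MeasureTheory Set Filter
open scoped Pointwise ENNReal Topology

/-- `a` is a Lebesgue density point of `A ⊆ ℝ^d`:
`|A ∩ B(a,r)| / |B(a,r)| → 1` as `r → 0⁺`. -/
def IsDensityPoint {d : ℕ} (A : Set (Fin d → ℝ)) (a : Fin d → ℝ) : Prop :=
  Tendsto (fun r : ℝ => volume (A ∩ Metric.ball a r) / volume (Metric.ball a r))
    (𝓝[>] 0) (𝓝 1)

/-- The set `A°` of Lebesgue density points of `A`. -/
def densityPoints {d : ℕ} (A : Set (Fin d → ℝ)) : Set (Fin d → ℝ) :=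
  {a | IsDensityPoint A a}

/-!
The reflection `y ↦ (a + b) - y` is a volume-preserving isometry sending `b` to `a`, so `a` is a
density point of `(a + b) - B`. Density points survive intersection with a measurable set, by
inclusion–exclusion inside each ball: the density ratios of `A` and `C` add up to at most one more
than that of `A ∩ C`. A density point forces positive measure. Finally the Lebesgue density
theorem gives `|A| ≤ |A°|`, and `A° + b ⊆ A° + B°` for any `b ∈ B°`, which is nonempty as
`|B| > 0`.
-/

open Metric

section MeasureRatio

variable {α : Type*} [MeasurableSpace α] (μ : Measure α)

theorem measure_inter_div_le_one (s u : Set α) : μ (s ∩ u) / μ u ≤ 1 :=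
  ENNReal.div_le_of_le_mul (by rw [one_mul]; exact measure_mono inter_subset_right)

theorem measure_inter_div_add_le (s : Set α) {t u : Set α} (ht : MeasurableSet t)
    (hu : MeasurableSet u) :
    μ (s ∩ u) / μ u + μ (t ∩ u) / μ u ≤ μ (s ∩ t ∩ u) / μ u + 1 := by
  calc μ (s ∩ u) / μ u + μ (t ∩ u) / μ u
      = (μ (s ∩ u ∪ t ∩ u) + μ (s ∩ t ∩ u)) / μ u := by
        rw [inter_inter_distrib_right, measure_union_add_inter _ (ht.inter hu), ENNReal.add_div]
    _ ≤ (μ u + μ (s ∩ t ∩ u)) / μ u := by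
        gcongr
        exact union_subset inter_subset_right inter_subset_right
    _ ≤ μ (s ∩ t ∩ u) / μ u + 1 := by
        rw [ENNReal.add_div, add_comm]
        gcongr
        exact ENNReal.div_self_le_one

end MeasureRatio

theorem closedBall_ae_eq_ball {E : Type*} [NormedAddCommGroup E] [NormedSpace ℝ E]
    [MeasurableSpace E] [BorelSpace E] [FiniteDimensional ℝ E] (μ : Measure E)
    [μ.IsAddHaarMeasure] (x : E) {r : ℝ} (hr : r ≠ 0) : closedBall x r =ᵐ[μ] ball x r :=
  (ae_le_set.2 <| by rw [closedBall_sdiff_ball]; exact μ.addHaar_sphere_of_ne_zero x hr).antisymm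
    ball_subset_closedBall.eventuallyLE

section DensityPoints

variable {d : ℕ}

theorem IsDensityPoint.inter {A C : Set (Fin d → ℝ)} {a : Fin d → ℝ} (hC : MeasurableSet C)
    (hAa : IsDensityPoint A a) (hCa : IsDensityPoint C a) : IsDensityPoint (A ∩ C) a := by
  have lower := ENNReal.Tendsto.sub (hAa.add hCa) tendsto_const_nhds (Or.inr ENNReal.one_ne_top)
  rw [show (1 + 1 - 1 : ℝ≥0∞) = 1 by simp] at lower
  exact tendsto_of_tendsto_of_tendsto_of_le_of_le lower tendsto_const_nhds
    (fun r => tsub_le_iff_right.2 (measure_inter_div_add_le _ _ hC isOpen_ball.measurableSet))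
    (fun r => measure_inter_div_le_one _ _ _)

theorem IsDensityPoint.preimage_sub_left {B : Set (Fin d → ℝ)} {s a : Fin d → ℝ}
    (h : IsDensityPoint B (s - a)) : IsDensityPoint ((s - ·) ⁻¹' B) a := by
  have hball : ∀ r, (s - ·) ⁻¹' ball (s - a) r = ball a r :=
    (IsometryEquiv.subLeft s).isometry.preimage_ball a
  have hvol : ∀ T, volume ((s - ·) ⁻¹' T) = volume T :=
    (volume.measurePreserving_sub_left s).measure_preimage_equiv (f := MeasurableEquiv.subLeft s)
  unfold IsDensityPoint at h ⊢
  convert h using 2 with r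
  rw [← hball, ← preimage_inter, hvol, hvol]

theorem IsDensityPoint.measure_pos {S : Set (Fin d → ℝ)} {a : Fin d → ℝ}
    (h : IsDensityPoint S a) : 0 < volume S := by
  refine pos_iff_ne_zero.2 fun h0 => one_ne_zero (tendsto_nhds_unique h ?_)
  simp [measure_mono_null inter_subset_left h0]

theorem ae_mem_densityPoints (S : Set (Fin d → ℝ)) :
    ∀ᵐ x ∂volume.restrict S, x ∈ densityPoints S := by
  filter_upwards [Besicovitch.ae_tendsto_measure_inter_div volume S] with x hx
  refine hx.congr' (eventually_mem_nhdsWithin.mono fun r hr => ?_)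
  have h := closedBall_ae_eq_ball volume x (ne_of_gt hr)
  rw [measure_congr h, measure_congr ((ae_eq_refl S).inter h)]

theorem measure_le_measure_densityPoints (S : Set (Fin d → ℝ)) :
    volume S ≤ volume (densityPoints S) := by
  have hnull : volume ((densityPoints S)ᶜ ∩ S) = 0 :=
    le_zero_iff.1 ((volume.le_restrict_apply S _).trans (ae_iff.1 (ae_mem_densityPoints S)).le)
  rw [inter_comm, ← sdiff_eq] at hnull
  exact measure_mono_ae (ae_le_set.2 hnull)

theorem densityPoints_nonempty {S : Set (Fin d → ℝ)} (hS : 0 < volume S) :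
    (densityPoints S).Nonempty :=
  nonempty_of_measure_ne_zero (hS.trans_le (measure_le_measure_densityPoints S)).ne'

end DensityPoints

theorem density_points_sumset_general (d : ℕ)
    (A B : Set (Fin d → ℝ)) (hB : MeasurableSet B) :
    (∀ a b : Fin d → ℝ, IsDensityPoint A a → IsDensityPoint B b →
      IsDensityPoint (A ∩ ((fun y => (a + b) - y) '' B)) a) ∧
    (∀ s ∈ densityPoints A + densityPoints B,
      0 < volume (A ∩ ((fun y => s - y) '' B))) ∧
    (0 < volume A → 0 < volume B →
      volume A ≤ volume (densityPoints A + densityPoints B)) := by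
  have reflect_eq (s : Fin d → ℝ) : (fun y => s - y) '' B = (fun y => s - y) ⁻¹' B :=
    congrFun (Function.Involutive.image_eq_preimage_symm (sub_sub_cancel s)) B
  have inter_reflect (a b : Fin d → ℝ) (ha : IsDensityPoint A a) (hb : IsDensityPoint B b) :
      IsDensityPoint (A ∩ ((fun y => (a + b) - y) '' B)) a := by
    rw [reflect_eq]
    refine ha.inter (hB.preimage (measurable_const.sub measurable_id)) ?_
    exact IsDensityPoint.preimage_sub_left (by rwa [add_sub_cancel_left])
  refine ⟨inter_reflect, ?_, fun _ hB0 => ?_⟩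
  · rintro s ⟨a, ha, b, hb, rfl⟩
    exact (inter_reflect a b ha hb).measure_pos
  · obtain ⟨b, hb⟩ := densityPoints_nonempty hB0
    calc volume A ≤ volume (densityPoints A) := measure_le_measure_densityPoints A
      _ = volume (densityPoints A + {b}) := by
        rw [add_singleton, image_add_right, measure_preimage_add_right]
      _ ≤ volume (densityPoints A + densityPoints B) :=
        measure_mono (add_subset_add_left (singleton_subset_iff.2 hb))

/-- If `a` is a density point of `A` and `b` is a density point of `B`, then with
`s = a + b`, the point `a` is a density point of `A ∩ (s - B)`; consequently
`|A ∩ (s - B)| > 0` for every `s` in the sumset `A° + B°` of the density points, and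
`|A° + B°| ≥ |A|` whenever `|A| > 0` (and `|B| > 0`). -/
theorem density_points_sumset (d : ℕ) (hd : 0 < d)
    (A B : Set (Fin d → ℝ)) (hA : MeasurableSet A) (hB : MeasurableSet B) :
    (∀ a b : Fin d → ℝ, IsDensityPoint A a → IsDensityPoint B b →
      IsDensityPoint (A ∩ ((fun y => (a + b) - y) '' B)) a) ∧
    (∀ s ∈ densityPoints A + densityPoints B,
      0 < volume (A ∩ ((fun y => s - y) '' B))) ∧
    (0 < volume A → 0 < volume B →
      volume A ≤ volume (densityPoints A + densityPoints B)) :=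
  density_points_sumset_general d A B hB
end
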